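/- arXiv:2002.12242 — 5 statements merged into one kernel-verified Lean document; each statement's English description precedes it below -/
import Mathlib

section
/- Fix G, s ∈ ℝ and V, h ≥ 0, and let N(g) = √(g² + G² + 2s). On the set {g > 0 : g² + 2s + G² > 0}, the derivative of Ξ(g) = (g² + 2s + G²)/(2V + 2g² + 2h·N(g)) − (1/2)·ln(V + g²) equals −g·N(g)·(2h²·N(g) + 2V·N(g) + 2g²·N(g) + 3g²h + 3hV)/(2(g² + V)(h·N(g) + g² + V)²), and in particular this derivative is non-positive. -/
/-!
Differentiate directly, writing `N = √(g² + a)` with `a = G² + 2s`, so that `N' = g / N` and the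
numerator `g² + a` of the first term of `Ξ` is `N²`; after clearing denominators the claimed formula
is a polynomial identity in `g, N, h, V`. Its sign is then visible: for `g, N, h, V ≥ 0` every
summand of the numerator is nonnegative and the denominator is `2 (g² + V)` times a square.
-/

open Real

/-- The derivative of `Ξ` at `g`, with `N` standing for `N(g)`. -/
noncomputable def xiDeriv (V h g N : ℝ) : ℝ :=
  -(g * N * (2 * h ^ 2 * N + 2 * V * N + 2 * g ^ 2 * N + 3 * g ^ 2 * h + 3 * h * V)) /
    (2 * (g ^ 2 + V) * (h * N + g ^ 2 + V) ^ 2)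

theorem xiDeriv_nonpos {V h g N : ℝ} (hV : 0 ≤ V) (hh : 0 ≤ h) (hg : 0 ≤ g) (hN : 0 ≤ N) :
    xiDeriv V h g N ≤ 0 := by
  unfold xiDeriv
  apply div_nonpos_of_nonpos_of_nonneg
  · rw [neg_nonpos]
    positivity
  · positivity

theorem hasDerivAt_sqrt_sq_add {a g : ℝ} (ha : 0 < g ^ 2 + a) :
    HasDerivAt (fun x => √(x ^ 2 + a)) (g / √(g ^ 2 + a)) g := by
  have hsq : HasDerivAt (fun x => x ^ 2 + a) (2 * g) g := by
    simpa using (hasDerivAt_pow 2 g).add_const a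
  convert hsq.sqrt ha.ne' using 1
  field_simp

theorem hasDerivAt_xi {a V h g : ℝ} (ha : 0 < g ^ 2 + a) (hV : V + g ^ 2 ≠ 0)
    (hD : h * √(g ^ 2 + a) + g ^ 2 + V ≠ 0) :
    HasDerivAt (fun x => (x ^ 2 + a) / (2 * V + 2 * x ^ 2 + 2 * h * √(x ^ 2 + a))
        - 1 / 2 * log (V + x ^ 2))
      (xiDeriv V h g √(g ^ 2 + a)) g := by
  have hsq : HasDerivAt (fun x => x ^ 2) (2 * g) g := by simpa using hasDerivAt_pow 2 g
  have hden : HasDerivAt (fun x => 2 * V + 2 * x ^ 2 + 2 * h * √(x ^ 2 + a))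
      (2 * (2 * g) + 2 * h * (g / √(g ^ 2 + a))) g :=
    ((hsq.const_mul 2).const_add (2 * V)).add ((hasDerivAt_sqrt_sq_add ha).const_mul (2 * h))
  have hden_ne : 2 * V + 2 * g ^ 2 + 2 * h * √(g ^ 2 + a) ≠ 0 := by
    contrapose! hD
    linarith
  have hΞ := ((hsq.add_const a).div hden hden_ne).sub
    (((hsq.const_add V).log hV).const_mul (1 / 2))
  refine hΞ.congr_deriv ?_
  set N := √(g ^ 2 + a)
  have hN_pos : 0 < N := sqrt_pos.mpr ha
  have hN_sq : g ^ 2 + a = N ^ 2 := (sq_sqrt ha.le).symm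
  have hgV : g ^ 2 + V ≠ 0 := by rwa [add_comm]
  rw [hN_sq, show 2 * V + 2 * g ^ 2 + 2 * h * N = 2 * (h * N + g ^ 2 + V) by ring]
  unfold xiDeriv
  field_simp
  ring

theorem stmt_4_general (G s V h g : ℝ) (hV : 0 ≤ h) (hh : 0 ≤ V) (hg : 0 < g)
    (hdom : 0 < g ^ 2 + 2 * s + G ^ 2) :
    HasDerivAt
      (fun x : ℝ =>
        (x ^ 2 + 2 * s + G ^ 2) /
            (2 * V + 2 * x ^ 2 + 2 * h * Real.sqrt (x ^ 2 + G ^ 2 + 2 * s))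
          - (1 / 2) * Real.log (V + x ^ 2))
      (-(g * Real.sqrt (g ^ 2 + G ^ 2 + 2 * s) *
          (2 * h ^ 2 * Real.sqrt (g ^ 2 + G ^ 2 + 2 * s)
            + 2 * V * Real.sqrt (g ^ 2 + G ^ 2 + 2 * s)
            + 2 * g ^ 2 * Real.sqrt (g ^ 2 + G ^ 2 + 2 * s)
            + 3 * g ^ 2 * h + 3 * h * V)) /
        (2 * (g ^ 2 + V) * (h * Real.sqrt (g ^ 2 + G ^ 2 + 2 * s) + g ^ 2 + V) ^ 2))
      g
    ∧ (-(g * Real.sqrt (g ^ 2 + G ^ 2 + 2 * s) *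
          (2 * h ^ 2 * Real.sqrt (g ^ 2 + G ^ 2 + 2 * s)
            + 2 * V * Real.sqrt (g ^ 2 + G ^ 2 + 2 * s)
            + 2 * g ^ 2 * Real.sqrt (g ^ 2 + G ^ 2 + 2 * s)
            + 3 * g ^ 2 * h + 3 * h * V)) /
        (2 * (g ^ 2 + V) * (h * Real.sqrt (g ^ 2 + G ^ 2 + 2 * s) + g ^ 2 + V) ^ 2)) ≤ 0 := by
  have hrad (x : ℝ) : x ^ 2 + G ^ 2 + 2 * s = x ^ 2 + (G ^ 2 + 2 * s) := add_assoc ..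
  have hnum (x : ℝ) : x ^ 2 + 2 * s + G ^ 2 = x ^ 2 + (G ^ 2 + 2 * s) := by ring
  have hN : 0 ≤ √(g ^ 2 + G ^ 2 + 2 * s) := sqrt_nonneg _
  refine ⟨?_, xiDeriv_nonpos hh hV hg.le hN⟩
  simp only [hrad, hnum]
  exact hasDerivAt_xi (by linarith) (by positivity) (by positivity)

theorem stmt_4 (G s V h g : ℝ) (hV : 0 ≤ h) (hh : 0 ≤ V) (hg : 0 < g)
    (hdom : 0 < g ^ 2 + 2 * s + G ^ 2)
    (hden1 : 0 < V + g ^ 2)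
    (hden2 : 0 < h * Real.sqrt (g ^ 2 + G ^ 2 + 2 * s) + g ^ 2 + V) :
    HasDerivAt
      (fun x : ℝ =>
        (x ^ 2 + 2 * s + G ^ 2) /
            (2 * V + 2 * x ^ 2 + 2 * h * Real.sqrt (x ^ 2 + G ^ 2 + 2 * s))
          - (1 / 2) * Real.log (V + x ^ 2))
      (-(g * Real.sqrt (g ^ 2 + G ^ 2 + 2 * s) *
          (2 * h ^ 2 * Real.sqrt (g ^ 2 + G ^ 2 + 2 * s)
            + 2 * V * Real.sqrt (g ^ 2 + G ^ 2 + 2 * s)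
            + 2 * g ^ 2 * Real.sqrt (g ^ 2 + G ^ 2 + 2 * s)
            + 3 * g ^ 2 * h + 3 * h * V)) /
        (2 * (g ^ 2 + V) * (h * Real.sqrt (g ^ 2 + G ^ 2 + 2 * s) + g ^ 2 + V) ^ 2))
      g
    ∧ (-(g * Real.sqrt (g ^ 2 + G ^ 2 + 2 * s) *
          (2 * h ^ 2 * Real.sqrt (g ^ 2 + G ^ 2 + 2 * s)
            + 2 * V * Real.sqrt (g ^ 2 + G ^ 2 + 2 * s)
            + 2 * g ^ 2 * Real.sqrt (g ^ 2 + G ^ 2 + 2 * s)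
            + 3 * g ^ 2 * h + 3 * h * V)) /
        (2 * (g ^ 2 + V) * (h * Real.sqrt (g ^ 2 + G ^ 2 + 2 * s) + g ^ 2 + V) ^ 2)) ≤ 0 :=
  stmt_4_general G s V h g hV hh hg hdom
end

section
/- For every x ≥ 0, W(x)^{1/2} − W(x)^{-1/2} ≤ √(max(0, ln x)), where W is the principal branch of the Lambert W function (the solution y ≥ 0 of y·e^y = x for x ≥ 0), and the left-hand side is interpreted as its limit −∞ (hence the inequality holds trivially) when W(x) = 0. -/
theorem stmt_6 (x W : ℝ) (hx : 0 < x) (hW : 0 < W)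
    (hWx : W * Real.exp W = x) :
    Real.sqrt W - 1 / Real.sqrt W ≤ Real.sqrt (max 0 (Real.log x)) := by
  have hsW : 0 < Real.sqrt W := Real.sqrt_pos.mpr hW
  rcases le_or_gt W 1 with h1 | h1
  · have hle : Real.sqrt W ≤ 1 := by
      rw [show (1:ℝ) = Real.sqrt 1 by simp]
      exact Real.sqrt_le_sqrt h1
    have : 1 ≤ 1 / Real.sqrt W := by
      rw [le_div_iff₀ hsW]; simpa using hle
    have : Real.sqrt W - 1 / Real.sqrt W ≤ 0 := by linarith
    exact this.trans (Real.sqrt_nonneg _)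
  · have hlogW : 0 ≤ Real.log W := Real.log_nonneg h1.le
    have hlx : Real.log x = Real.log W + W := by
      rw [← hWx, Real.log_mul (ne_of_gt hW) (Real.exp_pos _).ne', Real.log_exp]
    have h1s : 1 ≤ Real.sqrt W := by
      rw [show (1:ℝ) = Real.sqrt 1 by simp]
      exact Real.sqrt_le_sqrt h1.le
    have hLHS : 0 ≤ Real.sqrt W - 1 / Real.sqrt W := by
      have : 1 / Real.sqrt W ≤ 1 := by
        rw [div_le_one hsW]; exact h1s
      linarith
    rw [show max 0 (Real.log x) = Real.log x from max_eq_right (by rw [hlx]; linarith)]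
    rw [← Real.sqrt_sq hLHS]
    apply Real.sqrt_le_sqrt
    have hsq : Real.sqrt W ^ 2 = W := Real.sq_sqrt hW.le
    have hinv : (1 / Real.sqrt W) ^ 2 = 1 / W := by
      rw [div_pow, hsq, one_pow]
    have hWinv : 1 / W ≤ 1 := by rw [div_le_one hW]; exact h1.le
    have : (Real.sqrt W - 1 / Real.sqrt W) ^ 2 = W - 2 + 1 / W := by
      rw [sub_sq, hsq, hinv, mul_one_div, mul_div_assoc, div_self hsW.ne']
      ring
    rw [this, hlx]
    linarith
end

section
/- For θ > 0, define X(θ) = sup_{α ∈ ℝ} (α − exp(α²/2 − (1/2)·ln θ)). Then X(θ) ≤ √(max(0, ln θ)). -/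
theorem stmt_7 (θ : ℝ) (hθ : 0 < θ) :
    (⨆ α : ℝ, α - Real.exp (α ^ 2 / 2 - (1 / 2) * Real.log θ)) ≤
      Real.sqrt (max 0 (Real.log θ)) := by
  apply ciSup_le
  intro α
  set s := Real.sqrt (max 0 (Real.log θ)) with hsdef
  have hs : 0 ≤ s := Real.sqrt_nonneg _
  have hs2 : Real.log θ ≤ s ^ 2 := by
    rw [hsdef, Real.sq_sqrt (le_max_left 0 _)]; exact le_max_right _ _
  have h1 := Real.add_one_le_exp (α ^ 2 / 2 - (1 / 2) * Real.log θ)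
  have h2 := Real.exp_pos (α ^ 2 / 2 - (1 / 2) * Real.log θ)
  rcases le_or_gt α s with h | h
  · linarith
  · nlinarith [sq_nonneg (α - s - 1), mul_nonneg (le_of_lt (sub_pos.2 h)) hs]
end

section
/- For θ > 0, define X(θ) = sup_{α ∈ ℝ} (α − exp(α²/2 − (1/2)·ln θ)). Then X(θ) = inf_{η > 0} (1/(2η) + (η/2)·ln θ + η·ln η − η). -/
theorem stmt_8 (θ : ℝ) (hθ : 0 < θ) :
    (⨆ α : ℝ, α - Real.exp (α ^ 2 / 2 - (1 / 2) * Real.log θ)) =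
      ⨅ η : Set.Ioi (0 : ℝ),
        (1 / (2 * (η : ℝ)) + (η : ℝ) / 2 * Real.log θ
          + (η : ℝ) * Real.log (η : ℝ) - (η : ℝ)) := by
  set c : ℝ := (1 / 2) * Real.log θ with hc
  -- pointwise inequality
  have key : ∀ α η : ℝ, 0 < η →
      α - Real.exp (α ^ 2 / 2 - c) ≤
        1 / (2 * η) + η / 2 * Real.log θ + η * Real.log η - η := by
    intro α η hη
    have h1 : η * ((α ^ 2 / 2 - c) - Real.log η + 1) ≤ Real.exp (α ^ 2 / 2 - c) := by
      have h := Real.add_one_le_exp ((α ^ 2 / 2 - c) - Real.log η)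
      have := mul_le_mul_of_nonneg_left h hη.le
      calc η * ((α ^ 2 / 2 - c) - Real.log η + 1)
          ≤ η * Real.exp ((α ^ 2 / 2 - c) - Real.log η) := this
        _ = Real.exp (α ^ 2 / 2 - c) := by
            rw [Real.exp_sub, Real.exp_log hη]
            field_simp
    have h2 : α ≤ 1 / (2 * η) + η * α ^ 2 / 2 := by
      rw [← sub_nonneg]
      have he : 1 / (2 * η) + η * α ^ 2 / 2 - α = (η * α - 1) ^ 2 / (2 * η) := by
        field_simp; ring
      rw [he]; positivity
    have hcc : η * c = η / 2 * Real.log θ := by rw [hc]; ring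
    nlinarith [h1, h2]
  -- existence of the optimal α
  obtain ⟨α₀, hα₀mem, hα₀⟩ : ∃ α ∈ Set.Icc (0 : ℝ) (Real.exp c),
      α * Real.exp (α ^ 2 / 2 - c) = 1 := by
    have hcont : ContinuousOn (fun α : ℝ => α * Real.exp (α ^ 2 / 2 - c))
        (Set.Icc 0 (Real.exp c)) := by fun_prop
    have h0 : (0 : ℝ) * Real.exp (0 ^ 2 / 2 - c) = 0 := by ring
    have hub : (1 : ℝ) ≤ Real.exp c * Real.exp ((Real.exp c) ^ 2 / 2 - c) := by
      rw [← Real.exp_add]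
      have : (0 : ℝ) ≤ c + ((Real.exp c) ^ 2 / 2 - c) := by
        have he : c + ((Real.exp c) ^ 2 / 2 - c) = (Real.exp c) ^ 2 / 2 := by ring
        rw [he]; positivity
      calc (1 : ℝ) = Real.exp 0 := (Real.exp_zero).symm
        _ ≤ _ := Real.exp_le_exp.mpr this
    have := intermediate_value_Icc (Real.exp_pos c).le hcont
    have hmem : (1 : ℝ) ∈ Set.Icc ((0 : ℝ) * Real.exp (0 ^ 2 / 2 - c))
        (Real.exp c * Real.exp ((Real.exp c) ^ 2 / 2 - c)) := by
      constructor
      · rw [h0]; norm_num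
      · exact hub
    obtain ⟨α, hα, hval⟩ := this hmem
    exact ⟨α, hα, hval⟩
  have hα₀pos : 0 < α₀ := by
    rcases hα₀mem.1.lt_or_eq with h | h
    · exact h
    · exfalso; rw [← h] at hα₀; simp at hα₀
  set η₀ : ℝ := Real.exp (α₀ ^ 2 / 2 - c) with hη₀
  have hη₀pos : 0 < η₀ := Real.exp_pos _
  have hαη : α₀ * η₀ = 1 := hα₀
  have hlogη₀ : Real.log η₀ = α₀ ^ 2 / 2 - c := Real.log_exp _
  -- the value at η₀ equals the sup integrand at α₀
  have hval : 1 / (2 * η₀) + η₀ / 2 * Real.log θ + η₀ * Real.log η₀ - η₀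
      = α₀ - η₀ := by
    have h1 : 1 / (2 * η₀) = α₀ / 2 := by
      rw [div_eq_div_iff (by positivity : (2 * η₀ : ℝ) ≠ 0) (by norm_num : (2:ℝ) ≠ 0)]
      nlinarith [hαη]
    rw [h1, hlogη₀]
    have hcc : η₀ * c = η₀ / 2 * Real.log θ := by rw [hc]; ring
    nlinarith [hαη]
  -- bounded above sup
  have hbdd : BddAbove (Set.range fun α : ℝ => α - Real.exp (α ^ 2 / 2 - c)) := by
    refine ⟨1 / (2 * 1) + 1 / 2 * Real.log θ + 1 * Real.log 1 - 1, ?_⟩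
    rintro _ ⟨α, rfl⟩
    exact key α 1 one_pos
  have hbddb : BddBelow (Set.range fun η : Set.Ioi (0 : ℝ) =>
      (1 / (2 * (η : ℝ)) + (η : ℝ) / 2 * Real.log θ
        + (η : ℝ) * Real.log (η : ℝ) - (η : ℝ))) := by
    refine ⟨0 - Real.exp (0 ^ 2 / 2 - c), ?_⟩
    rintro _ ⟨⟨η, hη⟩, rfl⟩
    exact key 0 η hη
  apply le_antisymm
  · apply ciSup_le
    intro α
    apply le_ciInf
    rintro ⟨η, hη⟩
    exact key α η hη
  · calc (⨅ η : Set.Ioi (0 : ℝ), (1 / (2 * (η : ℝ)) + (η : ℝ) / 2 * Real.log θ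
          + (η : ℝ) * Real.log (η : ℝ) - (η : ℝ)))
        ≤ 1 / (2 * η₀) + η₀ / 2 * Real.log θ + η₀ * Real.log η₀ - η₀ :=
          ciInf_le hbddb ⟨η₀, hη₀pos⟩
      _ = α₀ - Real.exp (α₀ ^ 2 / 2 - c) := hval
      _ ≤ ⨆ α : ℝ, α - Real.exp (α ^ 2 / 2 - c) := le_ciSup hbdd α₀
end

section
/- For θ > 0, define X(θ) = sup_{α ∈ ℝ} (α − exp(α²/2 − (1/2)·ln θ)). Then X(θ) ≤ √(ln(exp(exp(−2)) + θ)). -/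
theorem stmt_10 (θ : ℝ) (hθ : 0 < θ) :
    (⨆ α : ℝ, α - Real.exp (α ^ 2 / 2 - (1 / 2) * Real.log θ)) ≤
      Real.sqrt (Real.log (Real.exp (Real.exp (-2)) + θ)) := by
  set c := Real.exp (Real.exp (-2)) with hc
  have hc1 : 1 < c := by
    rw [hc, show (1:ℝ) = Real.exp 0 by simp]
    exact Real.exp_lt_exp.2 (Real.exp_pos _)
  set L := Real.log (c + θ) with hLdef
  have hL0 : 0 < L := Real.log_pos (by linarith)
  set s := Real.sqrt L with hsdef
  have hs0 : 0 ≤ s := Real.sqrt_nonneg _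
  have hs2 : s ^ 2 = L := Real.sq_sqrt hL0.le
  apply ciSup_le
  intro α
  by_cases hα : α ≤ s
  · have := Real.exp_pos (α ^ 2 / 2 - (1 / 2) * Real.log θ); linarith
  · push_neg at hα
    have hexpL : Real.exp L = c + θ := Real.exp_log (by linarith)
    -- θ ≤ (c+θ) * L
    have hlog : 1 - (c + θ)⁻¹ ≤ L := Real.one_sub_inv_le_log_of_pos (by linarith)
    have hcθ : (0:ℝ) < c + θ := by linarith
    have hθL : θ ≤ (c + θ) * L := by
      have h1 : (c + θ) * (1 - (c + θ)⁻¹) ≤ (c + θ) * L :=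
        mul_le_mul_of_nonneg_left hlog hcθ.le
      have h2 : (c + θ) * (1 - (c + θ)⁻¹) = c + θ - 1 := by
        field_simp
      nlinarith
    -- exp((1/2) log θ) ≤ exp(L/2) * s
    have ha2 : Real.exp ((1 / 2) * Real.log θ) ^ 2 = θ := by
      rw [sq, ← Real.exp_add, show (1 / 2) * Real.log θ + (1 / 2) * Real.log θ = Real.log θ by ring,
        Real.exp_log hθ]
    have hb2 : (Real.exp (L / 2) * s) ^ 2 = (c + θ) * L := by
      rw [mul_pow, hs2, sq, ← Real.exp_add, show L / 2 + L / 2 = L by ring, hexpL]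
    have h4 : Real.exp ((1 / 2) * Real.log θ) ≤ Real.exp (L / 2) * s := by
      nlinarith [Real.exp_pos ((1 / 2) * Real.log θ), Real.exp_pos (L / 2),
        mul_nonneg (Real.exp_pos (L / 2)).le hs0]
    -- key: exp(α²/2) ≥ exp((1/2) log θ) * (α - s)
    have h1 : Real.exp (α ^ 2 / 2) = Real.exp (L / 2) * Real.exp ((α ^ 2 - L) / 2) := by
      rw [← Real.exp_add]; ring_nf
    have h2 : 1 + (α ^ 2 - L) / 2 ≤ Real.exp ((α ^ 2 - L) / 2) := by
      linarith [Real.add_one_le_exp ((α ^ 2 - L) / 2)]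
    have h3 : s * (α - s) ≤ (α ^ 2 - L) / 2 := by nlinarith
    have key : Real.exp ((1 / 2) * Real.log θ) * (α - s) ≤ Real.exp (α ^ 2 / 2) := by
      have hexL := Real.exp_pos (L / 2)
      nlinarith [mul_le_mul_of_nonneg_right h4 (by linarith : (0:ℝ) ≤ α - s)]
    have hE : α - s ≤ Real.exp (α ^ 2 / 2 - (1 / 2) * Real.log θ) := by
      rw [Real.exp_sub, le_div_iff₀ (Real.exp_pos _)]
      linarith [key]
    linarith
end
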